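/- arXiv:2512.22542 — 5 statements merged into one kernel-verified Lean document; each statement's English description precedes it below -/
import Mathlib

section
/- Let T be a finite tree on N ≥ 3 vertices, and let L be its set of leaves. Then the proportion of the total QPA weight at α = 1 carried by the leaves satisfies (Σ_{i ∈ L} w_i^Q(1)) / (Σ_{i ∈ V(T)} w_i^Q(1)) ≥ (7/12)·|L|/(N − 1). (Here the denominator equals Σ_i d_i = 2(N − 1) and each leaf weight is at least 7/6.) -/
open Finset

private lemma qpa_leaf_nbr_deg {V : Type*} [Fintype V]
    (T : SimpleGraph V) [DecidableRel T.Adj] (hT : T.IsTree)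
    (hcard : 3 ≤ Fintype.card V) {v u : V}
    (hv : T.degree v = 1) (hu : T.Adj v u) : 2 ≤ T.degree u := by
  classical
  by_contra h
  push_neg at h
  have h1 : 1 ≤ T.degree u := by
    rw [← SimpleGraph.card_neighborFinset_eq_degree]
    exact Finset.card_pos.mpr ⟨v, by simp [hu.symm]⟩
  have hdu : T.degree u = 1 := le_antisymm (by omega) h1
  -- neighbor finsets are singletons
  have hNv : T.neighborFinset v = {u} := by
    obtain ⟨a, ha⟩ := Finset.card_eq_one.mp
      (show (T.neighborFinset v).card = 1 by
        rw [SimpleGraph.card_neighborFinset_eq_degree]; exact hv)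
    have : u ∈ T.neighborFinset v := by simp [hu]
    rw [ha] at this ⊢
    simp_all
  have hNu : T.neighborFinset u = {v} := by
    obtain ⟨a, ha⟩ := Finset.card_eq_one.mp
      (show (T.neighborFinset u).card = 1 by
        rw [SimpleGraph.card_neighborFinset_eq_degree]; exact hdu)
    have : v ∈ T.neighborFinset u := by simp [hu.symm]
    rw [ha] at this ⊢
    simp_all
  have key : ∀ a b : V, T.Walk a b → a ∈ ({v, u} : Set V) → b ∈ ({v, u} : Set V) := by
    intro a b p
    induction p with
    | nil => exact id
    | cons hadj q ih =>
      rename_i x y z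
      intro ha
      apply ih
      rcases ha with rfl | ha
      · have : y ∈ T.neighborFinset x := by simp [hadj]
        rw [hNv] at this
        simp at this
        simp [this]
      · simp only [Set.mem_singleton_iff] at ha
        subst ha
        have : y ∈ T.neighborFinset x := by simp [hadj]
        rw [hNu] at this
        simp at this
        simp [this]
  obtain ⟨x, hx⟩ : ∃ x : V, x ∉ ({v, u} : Finset V) := by
    by_contra hc
    push_neg at hc
    have : (Finset.univ : Finset V) ⊆ {v, u} := fun x _ => hc x
    have := Finset.card_le_card this
    have h2 : ({v, u} : Finset V).card ≤ 2 := Finset.card_insert_le _ _ |>.trans (by simp)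
    simp only [Finset.card_univ] at this
    omega
  obtain ⟨p⟩ := hT.isConnected.preconnected v x
  have := key v x p (by simp)
  simp at hx this
  tauto

/-- **Leaf share of the total QPA weight at α = 1 in a tree.**
For a finite tree `T` on `N ≥ 3` vertices with leaf set `L`, the proportion of
the total QPA weight at `α = 1` carried by the leaves satisfies
`(Σ_{i ∈ L} w_i^Q(1)) / (Σ_i w_i^Q(1)) ≥ (7/12)·|L|/(N − 1)`,
where `w_i^Q(1) = d_i/(d_i + 1) + Σ_{j ∼ i} d_j/(d_j + 1)`. -/
theorem qpa_leaf_weight_proportion {V : Type*} [Fintype V]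
    (T : SimpleGraph V) [DecidableRel T.Adj] (hT : T.IsTree)
    (hcard : 3 ≤ Fintype.card V)
    (w : V → ℝ)
    (hw : ∀ i : V, w i = (T.degree i : ℝ) / ((T.degree i : ℝ) + 1)
      + ∑ j ∈ T.neighborFinset i, (T.degree j : ℝ) / ((T.degree j : ℝ) + 1))
    (L : Finset V) (hL : L = {v : V | T.degree v = 1}) :
    (7 / 12 : ℝ) * (L.card : ℝ) / ((Fintype.card V : ℝ) - 1)
      ≤ (∑ i ∈ L, w i) / (∑ i : V, w i) := by
  classical
  have hmemL : ∀ i, i ∈ L ↔ T.degree i = 1 := by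
    intro i
    rw [← Finset.mem_coe, hL]
    rfl
  set f : V → ℝ := fun j => (T.degree j : ℝ) / ((T.degree j : ℝ) + 1) with hf
  -- total weight equals sum of degrees
  have hswap : ∑ i : V, ∑ j ∈ T.neighborFinset i, f j
      = ∑ j : V, (T.degree j : ℝ) * f j := by
    rw [Finset.sum_comm' (t' := Finset.univ) (s' := fun j => T.neighborFinset j)
      (fun x y => by simp [SimpleGraph.mem_neighborFinset, SimpleGraph.adj_comm])]
    simp [SimpleGraph.card_neighborFinset_eq_degree, mul_comm]
  have htot : ∑ i : V, w i = ∑ i : V, (T.degree i : ℝ) := by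
    calc ∑ i : V, w i = ∑ i : V, (f i + ∑ j ∈ T.neighborFinset i, f j) := by
          apply Finset.sum_congr rfl; intro i _; rw [hw i]
      _ = ∑ i : V, f i + ∑ i : V, ∑ j ∈ T.neighborFinset i, f j := Finset.sum_add_distrib
      _ = ∑ i : V, (f i + (T.degree i : ℝ) * f i) := by
          rw [hswap, ← Finset.sum_add_distrib]
      _ = ∑ i : V, (T.degree i : ℝ) := by
          apply Finset.sum_congr rfl
          intro i _
          have hpos : (0 : ℝ) < (T.degree i : ℝ) + 1 := by positivity
          simp only [hf]
          field_simp
          ring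
  have hdeg : ∑ i : V, (T.degree i : ℝ) = 2 * ((Fintype.card V : ℝ) - 1) := by
    have h1 : ∑ i : V, T.degree i = 2 * T.edgeFinset.card :=
      SimpleGraph.sum_degrees_eq_twice_card_edges T
    have h2 : T.edgeFinset.card + 1 = Fintype.card V := hT.card_edgeFinset
    have h3 : ∑ i : V, (T.degree i : ℝ) = 2 * (T.edgeFinset.card : ℝ) := by
      exact_mod_cast h1
    have h4 : (T.edgeFinset.card : ℝ) = (Fintype.card V : ℝ) - 1 := by
      rw [← h2]; push_cast; ring
    rw [h3, h4]
  -- each leaf has weight at least 7/6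
  have hleaf : ∀ i ∈ L, (7 / 6 : ℝ) ≤ w i := by
    intro i hi
    have hdi : T.degree i = 1 := (hmemL i).mp hi
    obtain ⟨a, ha⟩ := Finset.card_eq_one.mp
      (show (T.neighborFinset i).card = 1 by
        rw [SimpleGraph.card_neighborFinset_eq_degree]; exact hdi)
    have hadj : T.Adj i a := by
      rw [← SimpleGraph.mem_neighborFinset, ha]; simp
    have hda : 2 ≤ T.degree a := qpa_leaf_nbr_deg T hT hcard hdi hadj
    have hda' : (2 : ℝ) ≤ (T.degree a : ℝ) := by exact_mod_cast hda
    rw [hw i, hdi, ha]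
    simp only [Finset.sum_singleton]
    have h1 : (2 : ℝ) / 3 ≤ (T.degree a : ℝ) / ((T.degree a : ℝ) + 1) := by
      rw [div_le_div_iff₀ (by norm_num) (by positivity)]
      nlinarith
    push_cast
    linarith
  have hLsum : (7 / 6 : ℝ) * L.card ≤ ∑ i ∈ L, w i := by
    calc (7 / 6 : ℝ) * L.card = ∑ _i ∈ L, (7 / 6 : ℝ) := by
          rw [Finset.sum_const, nsmul_eq_mul]; ring
      _ ≤ ∑ i ∈ L, w i := Finset.sum_le_sum hleaf
  have hN : (2 : ℝ) ≤ (Fintype.card V : ℝ) - 1 := by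
    have : (3 : ℝ) ≤ (Fintype.card V : ℝ) := by exact_mod_cast hcard
    linarith
  rw [htot, hdeg, div_le_div_iff₀ (by linarith) (by linarith)]
  have hLc : (0 : ℝ) ≤ (L.card : ℝ) := Nat.cast_nonneg _
  nlinarith
end

section
/- Let r be a real number with 0 < r < 1. Define Q_k = (1 − r)·r^{k−1} for integers k ≥ 1. Then: (i) Q satisfies the stationarity equations Q_1·(1 − r) = (1 − r) − Q_1·r and Q_k·(1 − r) = (Q_{k−1} − Q_k)·r for all k ≥ 2; (ii) Q is the unique real sequence (Q_k)_{k ≥ 1} satisfying these equations; (iii) Σ_{k=1}^∞ Q_k = 1; and (iv) the resulting asymptotic proportion of leaves is (1 − r)·Q_1 + r = 1 − r + r². -/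
/-- **Degree profile of the king's neighbors in the CR model at α = ∞, r ∈ (0,1).**
Let `Q_k = (1 − r)·r^{k−1}` for `k ≥ 1`. Then:
(i) `Q` satisfies the stationarity equations
    `Q_1·(1 − r) = (1 − r) − Q_1·r` and `Q_k·(1 − r) = (Q_{k−1} − Q_k)·r` for `k ≥ 2`;
(ii) `Q` is the unique sequence satisfying these equations;
(iii) `Σ_{k≥1} Q_k = 1`;
(iv) the asymptotic proportion of leaves is `(1 − r)·Q_1 + r = 1 − r + r²`. -/
theorem king_neighbor_degree_profile (r : ℝ) (hr0 : 0 < r) (hr1 : r < 1)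
    (Q : ℕ → ℝ) (hQ : ∀ k : ℕ, 1 ≤ k → Q k = (1 - r) * r ^ (k - 1)) :
    (Q 1 * (1 - r) = (1 - r) - Q 1 * r
      ∧ ∀ k : ℕ, 2 ≤ k → Q k * (1 - r) = (Q (k - 1) - Q k) * r)
    ∧ (∀ Q' : ℕ → ℝ,
        (Q' 1 * (1 - r) = (1 - r) - Q' 1 * r
          ∧ ∀ k : ℕ, 2 ≤ k → Q' k * (1 - r) = (Q' (k - 1) - Q' k) * r) →
        ∀ k : ℕ, 1 ≤ k → Q' k = Q k)
    ∧ (∑' k : ℕ, Q (k + 1)) = 1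
    ∧ (1 - r) * Q 1 + r = 1 - r + r ^ 2 := by
  have h1 : Q 1 = 1 - r := by simpa using hQ 1 le_rfl
  refine ⟨⟨by rw [h1]; ring, ?_⟩, ?_, ?_, by rw [h1]; ring⟩
  · intro k hk
    obtain ⟨m, rfl⟩ : ∃ m, k = m + 2 := ⟨k - 2, by omega⟩
    rw [hQ (m + 2) (by omega), hQ (m + 2 - 1) (by omega)]
    have e1 : m + 2 - 1 = m + 1 := rfl
    have e2 : m + 1 - 1 = m := rfl
    rw [e1, e2, pow_succ]
    ring
  · rintro Q' ⟨h1', hrec⟩ k hk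
    obtain ⟨m, rfl⟩ : ∃ m, k = m + 1 := ⟨k - 1, by omega⟩
    clear hk
    induction m with
    | zero =>
      rw [h1]
      nlinarith [h1']
    | succ n ih =>
      have h := hrec (n + 2) (by omega)
      have e : n + 2 - 1 = n + 1 := rfl
      rw [e] at h
      have hQ' : Q' (n + 2) = Q' (n + 1) * r := by linarith
      rw [hQ', ih, hQ (n + 1) (by omega), hQ (n + 2) (by omega)]
      have e2 : n + 1 - 1 = n := rfl
      have e3 : n + 2 - 1 = n + 1 := rfl
      rw [e2, e3, pow_succ]
      ring
  · have : ∀ k : ℕ, Q (k + 1) = (1 - r) * r ^ k := by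
      intro k
      rw [hQ (k + 1) (by omega)]
      simp
    rw [tsum_congr this, tsum_mul_left, tsum_geometric_of_lt_one hr0.le hr1]
    exact div_self (by linarith)
end

section
/- Let α > 1 be a real number and let β, γ ≥ 0 be real numbers. Then min((α − 1)·γ, (α − 1)·β − γ) ≤ ((α − 1)²/(2α − 1))·(β + γ), with equality if and only if γ = ((α − 1)/α)·β. -/
/-!
The right-hand side is the convex combination of `(α - 1) * γ` and `(α - 1) * β - γ` with the
weights `α / (2α - 1)` and `(α - 1) / (2α - 1)`, both positive for `α > 1`. A convex combination
dominates the minimum, strictly so unless the two values agree, and they agree exactly when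
`α * γ = (α - 1) * β`.
-/

section ConvexCombination

variable {𝕜 E : Type*} [Semiring 𝕜] [PartialOrder 𝕜] [AddCommMonoid E] [LinearOrder E]
  [IsOrderedCancelAddMonoid E] [Module 𝕜 E] [PosSMulStrictMono 𝕜 E] {a b : 𝕜} {x y : E}

theorem Convex.min_lt_combo_of_ne (hxy : x ≠ y) (ha : 0 < a) (hb : 0 < b) (hab : a + b = 1) :
    min x y < a • x + b • y := by
  rcases hxy.lt_or_gt with hlt | hgt
  · rw [min_eq_left hlt.le]
    exact (openSegment_subset_Ioo hlt ⟨a, b, ha, hb, hab, rfl⟩).1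
  · rw [min_eq_right hgt.le, add_comm]
    exact (openSegment_subset_Ioo hgt ⟨b, a, hb, ha, by rwa [add_comm], rfl⟩).1

theorem Convex.min_eq_combo_iff (ha : 0 < a) (hb : 0 < b) (hab : a + b = 1) :
    min x y = a • x + b • y ↔ x = y := by
  refine ⟨fun h => ?_, fun h => ?_⟩
  · by_contra hxy
    exact (Convex.min_lt_combo_of_ne hxy ha hb hab).ne h
  · rw [h, min_self, Convex.combo_self hab]

end ConvexCombination

theorem layered_bound_eq_combo (α β γ : ℝ) :
    (α - 1) ^ 2 / (2 * α - 1) * (β + γ)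
      = α / (2 * α - 1) * ((α - 1) * γ) + (α - 1) / (2 * α - 1) * ((α - 1) * β - γ) := by
  simp only [div_mul_eq_mul_div, ← add_div]
  ring

theorem layered_exponents_eq_iff {α : ℝ} (hα : α ≠ 0) (β γ : ℝ) :
    (α - 1) * γ = (α - 1) * β - γ ↔ γ = (α - 1) / α * β := by
  rw [div_mul_eq_mul_div, eq_div_iff hα]
  constructor <;> intro h <;> linarith

theorem layered_hierarchy_optimization_general (α β γ : ℝ) (hα : 1 < α) :
    min ((α - 1) * γ) ((α - 1) * β - γ) ≤ (α - 1) ^ 2 / (2 * α - 1) * (β + γ)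
    ∧ (min ((α - 1) * γ) ((α - 1) * β - γ) = (α - 1) ^ 2 / (2 * α - 1) * (β + γ)
        ↔ γ = (α - 1) / α * β) := by
  have hden : 0 < 2 * α - 1 := by linarith
  have hw₁ : 0 < α / (2 * α - 1) := div_pos (by linarith) hden
  have hw₂ : 0 < (α - 1) / (2 * α - 1) := div_pos (by linarith) hden
  have hw : α / (2 * α - 1) + (α - 1) / (2 * α - 1) = 1 := by
    rw [← add_div, div_eq_one_iff_eq hden.ne']
    ring
  rw [layered_bound_eq_combo, ← layered_exponents_eq_iff (by linarith : α ≠ 0)]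
  exact ⟨Convex.min_le_combo _ _ hw₁.le hw₂.le hw, Convex.min_eq_combo_iff hw₁ hw₂ hw⟩

/-- **Key optimization step in the layered-hierarchy theorem.**
For real `α > 1` and `β, γ ≥ 0`:
`min((α − 1)·γ, (α − 1)·β − γ) ≤ ((α − 1)²/(2α − 1))·(β + γ)`,
with equality if and only if `γ = ((α − 1)/α)·β`. -/
theorem layered_hierarchy_optimization (α β γ : ℝ) (hα : 1 < α)
    (hβ : 0 ≤ β) (hγ : 0 ≤ γ) :
    min ((α - 1) * γ) ((α - 1) * β - γ) ≤ (α - 1) ^ 2 / (2 * α - 1) * (β + γ)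
    ∧ (min ((α - 1) * γ) ((α - 1) * β - γ) = (α - 1) ^ 2 / (2 * α - 1) * (β + γ)
        ↔ γ = (α - 1) / α * β) :=
  layered_hierarchy_optimization_general α β γ hα
end

section
/- Let α > 1 be a real number, let k ≥ 1 be an integer, and let β_1, ..., β_k be nonnegative real numbers with Σ_{i=1}^k β_i = 1; set β_{k+1} = 0 and S_i = Σ_{j=1}^{i−1} β_j. Then max_{1 ≤ i ≤ k} (α·β_i + (α − 1)·β_{i+1} + S_i) − max_{1 ≤ i ≤ k} (α·β_i + S_i) ≤ (α − 1)²/(2α − 1). -/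
/-- **Layered hierarchy: upper bound on the weight-growth exponent.**
Let `α > 1`, `k ≥ 1`, and `β_1, …, β_k ≥ 0` with `Σ_{i=1}^k β_i = 1`; set
`β_{k+1} = 0` and `S_i = Σ_{j=1}^{i−1} β_j`. Then
`max_{1 ≤ i ≤ k} (α·β_i + (α − 1)·β_{i+1} + S_i) − max_{1 ≤ i ≤ k} (α·β_i + S_i)
  ≤ (α − 1)²/(2α − 1)`. -/
theorem layered_hierarchy_growth_exponent_bound (α : ℝ) (hα : 1 < α)
    (k : ℕ) (hk : 1 ≤ k) (β : ℕ → ℝ)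
    (hβ : ∀ i : ℕ, 1 ≤ i → i ≤ k → 0 ≤ β i)
    (hsum : ∑ i ∈ Finset.Icc 1 k, β i = 1)
    (hlast : β (k + 1) = 0) :
    (Finset.Icc 1 k).sup' (Finset.nonempty_Icc.mpr hk)
        (fun i => α * β i + (α - 1) * β (i + 1) + ∑ j ∈ Finset.Ico 1 i, β j)
      - (Finset.Icc 1 k).sup' (Finset.nonempty_Icc.mpr hk)
        (fun i => α * β i + ∑ j ∈ Finset.Ico 1 i, β j)
      ≤ (α - 1) ^ 2 / (2 * α - 1) := by
  have hne := Finset.nonempty_Icc.mpr hk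
  have hD : (0:ℝ) < 2 * α - 1 := by linarith
  obtain ⟨i, hi, hgi⟩ := Finset.exists_mem_eq_sup' hne
    (fun i => α * β i + (α - 1) * β (i + 1) + ∑ j ∈ Finset.Ico 1 i, β j)
  rw [hgi]
  have hi1 : 1 ≤ i := (Finset.mem_Icc.mp hi).1
  have hik : i ≤ k := (Finset.mem_Icc.mp hi).2
  have hfi : α * β i + ∑ j ∈ Finset.Ico 1 i, β j ≤
      (Finset.Icc 1 k).sup' hne (fun i => α * β i + ∑ j ∈ Finset.Ico 1 i, β j) :=
    Finset.le_sup' (fun i => α * β i + ∑ j ∈ Finset.Ico 1 i, β j) hi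
  rcases eq_or_lt_of_le hik with rfl | hlt
  · have hRHS : (0:ℝ) ≤ (α - 1) ^ 2 / (2 * α - 1) :=
      div_nonneg (by positivity) (le_of_lt hD)
    simp only [hlast, mul_zero, add_zero]
    linarith
  · have hi1k : i + 1 ∈ Finset.Icc 1 k := Finset.mem_Icc.mpr ⟨by omega, hlt⟩
    have hfi1 : α * β (i + 1) + ∑ j ∈ Finset.Ico 1 (i + 1), β j ≤
        (Finset.Icc 1 k).sup' hne (fun i => α * β i + ∑ j ∈ Finset.Ico 1 i, β j) :=
      Finset.le_sup' (fun i => α * β i + ∑ j ∈ Finset.Ico 1 i, β j) hi1k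
    have hsucc : ∑ j ∈ Finset.Ico 1 (i + 1), β j = (∑ j ∈ Finset.Ico 1 i, β j) + β i :=
      Finset.sum_Ico_succ_top hi1 β
    have hb0 : 0 ≤ β i := hβ _ hi1 hik
    have ht0 : 0 ≤ β (i + 1) := hβ _ (by omega) hlt
    have hbt : β i + β (i + 1) ≤ 1 := by
      have hsub : ({i, i + 1} : Finset ℕ) ⊆ Finset.Icc 1 k := by
        intro x hx
        simp only [Finset.mem_insert, Finset.mem_singleton] at hx
        rcases hx with rfl | rfl
        · exact hi
        · exact hi1k
      have hle := Finset.sum_le_sum_of_subset_of_nonneg hsub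
        (fun x hx _ => hβ x (Finset.mem_Icc.mp hx).1 (Finset.mem_Icc.mp hx).2)
      rw [Finset.sum_pair (by omega)] at hle
      linarith [hle.trans_eq hsum]
    refine (le_div_iff₀ hD).mpr ?_
    rcases le_total (β (i + 1) * (2 * α - 1)) (α - 1) with h | h
    · nlinarith [hfi, ht0, hα]
    · nlinarith [hfi1, hsucc, hbt, hα]
end

section
/- Let α > 1 be a real number, and take k = 2 with β_1 = α/(2α − 1) and β_2 = (α − 1)/(2α − 1); set β_3 = 0, S_1 = 0, S_2 = β_1. Then β_1, β_2 ≥ 0, β_1 + β_2 = 1, and max_{1 ≤ i ≤ 2} (α·β_i + (α − 1)·β_{i+1} + S_i) − max_{1 ≤ i ≤ 2} (α·β_i + S_i) = (α − 1)²/(2α − 1); that is, the upper bound (α − 1)²/(2α − 1) on the weight-growth exponent of a layered hierarchy is attained by exactly the hierarchy with three essential layers with exponents β_1 = α/(2α − 1) and β_2 = (α − 1)/(2α − 1). -/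
/-!
At `β₁ = α/(2α − 1)` the two weight exponents `α β₁` and `α β₂ + β₁` coincide, so the total
weight is dominated by both layers at once. The growth exponent of the second layer then equals
this common value, while that of the first layer exceeds it by `(α − 1) β₂`; hence the
difference of the maxima is `(α − 1) β₂ = (α − 1)²/(2α − 1)`.
-/

theorem weight_exponents_balanced {α β₁ β₂ : ℝ} (hsum : β₁ + β₂ = 1)
    (hβ₁ : β₁ * (2 * α - 1) = α) :
    α * β₂ + β₁ = α * β₁ := by
  linear_combination α * hsum - hβ₁

theorem growth_sub_weight_exponent_of_balanced {α β₁ β₂ : ℝ} (hα : 1 ≤ α) (hβ₂ : 0 ≤ β₂)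
    (hbal : α * β₂ + β₁ = α * β₁) :
    max (α * β₁ + (α - 1) * β₂ + 0) (α * β₂ + (α - 1) * 0 + β₁)
        - max (α * β₁ + 0) (α * β₂ + β₁)
      = (α - 1) * β₂ := by
  have hexcess : 0 ≤ (α - 1) * β₂ := mul_nonneg (sub_nonneg.mpr hα) hβ₂
  rw [mul_zero, add_zero, add_zero, add_zero, hbal, max_self,
    max_eq_left (le_add_of_nonneg_right hexcess)]
  ring

/-- **The three-layer hierarchy attains the optimal weight-growth exponent.**
Let `α > 1`, `k = 2`, `β₁ = α/(2α − 1)`, `β₂ = (α − 1)/(2α − 1)`, `β₃ = 0`,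
`S₁ = 0`, `S₂ = β₁`. Then `β₁, β₂ ≥ 0`, `β₁ + β₂ = 1`, and
`max_{1 ≤ i ≤ 2}(α·β_i + (α − 1)·β_{i+1} + S_i) − max_{1 ≤ i ≤ 2}(α·β_i + S_i)
  = (α − 1)²/(2α − 1)`. -/
theorem three_layer_hierarchy_optimal (α : ℝ) (hα : 1 < α)
    (β₁ β₂ : ℝ) (hβ₁ : β₁ = α / (2 * α - 1)) (hβ₂ : β₂ = (α - 1) / (2 * α - 1)) :
    0 ≤ β₁ ∧ 0 ≤ β₂ ∧ β₁ + β₂ = 1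
    ∧ max (α * β₁ + (α - 1) * β₂ + 0) (α * β₂ + (α - 1) * 0 + β₁)
        - max (α * β₁ + 0) (α * β₂ + β₁)
      = (α - 1) ^ 2 / (2 * α - 1) := by
  have hden : 0 < 2 * α - 1 := by linarith
  have hβ₁_nonneg : 0 ≤ β₁ := hβ₁ ▸ div_nonneg (by linarith) hden.le
  have hβ₂_nonneg : 0 ≤ β₂ := hβ₂ ▸ div_nonneg (by linarith) hden.le
  have hsum : β₁ + β₂ = 1 := by
    rw [hβ₁, hβ₂, ← add_div, div_eq_one_iff_eq hden.ne']
    ring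
  have hbal : α * β₂ + β₁ = α * β₁ :=
    weight_exponents_balanced hsum (by rw [hβ₁, div_mul_cancel₀ _ hden.ne'])
  refine ⟨hβ₁_nonneg, hβ₂_nonneg, hsum, ?_⟩
  rw [growth_sub_weight_exponent_of_balanced hα.le hβ₂_nonneg hbal, hβ₂, mul_div_assoc', sq]
end
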